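/- arXiv:2508.10373 — 4 statements merged into one kernel-verified Lean document; each statement's English description precedes it below -/
import Mathlib

section
/- Let d be even. For p ∈ R^d, fix random reals r₁,r₂,r₃,r₄ with r₄ ≠ 0, a permutation π₁ of coordinates, reals α_{p,1}, α_{p,2}, r'_{p,1}, r'_{p,2}, r'_{p,3}, and for q ∈ R^d reals β_{q,1}, β_{q,2}. Set γ_p = (‖p‖² − r'_{p,1} r₁ − r'_{p,2} r₂ − r'_{p,3} r₃)/r₄. With p̂ = π₁(p̌) and q̂ = π₁(q̌) (p̌, q̌ as in the sum/difference pairing construction with q̌ negated), define p̂₁ = [p̂₁,...,p̂_{d/2}, α_{p,1}, −α_{p,1}, r'_{p,1}, r'_{p,2}], p̂₂ = [p̂_{d/2+1},...,p̂_d, α_{p,2}, α_{p,2}, r'_{p,3}, γ_p], q̂₁ = [q̂₁,...,q̂_{d/2}, β_{q,1}, β_{q,1}, r₁, r₂], q̂₂ = [q̂_{d/2+1},...,q̂_d, β_{q,2}, −β_{q,2}, r₃, r₄]. Then the inner product of the concatenation [p̂₁; p̂₂] with [q̂₁; q̂₂] equals ‖p‖² − 2 pᵀq. -/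
open Matrix

/-- The sum/difference pairing: p̌ = [p₁+p₂, p₁−p₂, p₃+p₄, p₃−p₄, ...]. -/
def pairSD (m : ℕ) (p : Fin (2 * m) → ℝ) : Fin (2 * m) → ℝ :=
  fun i =>
    if i.val % 2 = 0 then
      p ⟨2 * (i.val / 2), by have := i.isLt; omega⟩ +
        p ⟨2 * (i.val / 2) + 1, by have := i.isLt; omega⟩
    else
      p ⟨2 * (i.val / 2), by have := i.isLt; omega⟩ -
        p ⟨2 * (i.val / 2) + 1, by have := i.isLt; omega⟩

/-- First half of a vector in R^{2m}. -/
def half1 (m : ℕ) (v : Fin (2 * m) → ℝ) : Fin m → ℝ :=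
  fun i => v ⟨i.val, by have := i.isLt; omega⟩

/-- Second half of a vector in R^{2m}. -/
def half2 (m : ℕ) (v : Fin (2 * m) → ℝ) : Fin m → ℝ :=
  fun i => v ⟨m + i.val, by have := i.isLt; omega⟩


lemma sum_pair (m : ℕ) (f : Fin (2 * m) → ℝ) :
    ∑ i, f i = ∑ j : Fin m, (f ⟨2 * j.val, by omega⟩ + f ⟨2 * j.val + 1, by omega⟩) := by
  rw [← Equiv.sum_comp ((finProdFinEquiv (m := m) (n := 2)).trans (finCongr (Nat.mul_comm m 2))) f]
  rw [Fintype.sum_prod_type]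
  refine Finset.sum_congr rfl fun j _ => ?_
  rw [Fin.sum_univ_two]
  congr 1 <;> · congr 1; simp [finProdFinEquiv, finCongr]; try omega

lemma pairSD_dot (m : ℕ) (p q : Fin (2 * m) → ℝ) :
    pairSD m p ⬝ᵥ pairSD m q = 2 * (p ⬝ᵥ q) := by
  unfold dotProduct
  rw [sum_pair m (fun i => pairSD m p i * pairSD m q i),
    sum_pair m (fun i => p i * q i), Finset.mul_sum]
  refine Finset.sum_congr rfl fun j _ => ?_
  have h1 : (2 * j.val) % 2 = 0 := by omega
  have h2 : (2 * j.val) / 2 = j.val := by omega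
  have h3 : (2 * j.val + 1) % 2 = 1 := by omega
  have h4 : (2 * j.val + 1) / 2 = j.val := by omega
  simp [pairSD, h1, h2, h3, h4]
  ring

lemma halves_dot (m : ℕ) (u v : Fin (2 * m) → ℝ) :
    half1 m u ⬝ᵥ half1 m v + half2 m u ⬝ᵥ half2 m v = u ⬝ᵥ v := by
  unfold dotProduct half1 half2
  rw [← Equiv.sum_comp (finCongr (by omega : m + m = 2 * m)) (fun i => u i * v i),
    Fin.sum_univ_add]
  congr 1

lemma dot_perm (m : ℕ) (π : Equiv.Perm (Fin (2 * m))) (u v : Fin (2 * m) → ℝ) :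
    (u ∘ π) ⬝ᵥ (v ∘ π) = u ⬝ᵥ v := by
  unfold dotProduct
  exact Equiv.sum_comp π (fun i => u i * v i)

theorem stmt4 (m : ℕ) (π₁ : Equiv.Perm (Fin (2 * m)))
    (p q : Fin (2 * m) → ℝ)
    (r₁ r₂ r₃ r₄ : ℝ) (hr₄ : r₄ ≠ 0)
    (α₁ α₂ rp₁ rp₂ rp₃ β₁ β₂ : ℝ) :
    let phat := pairSD m p ∘ π₁
    let qhat := (-(pairSD m q)) ∘ π₁
    let γ := (p ⬝ᵥ p - rp₁ * r₁ - rp₂ * r₂ - rp₃ * r₃) / r₄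
    (Fin.append (Fin.append (half1 m phat) ![α₁, -α₁, rp₁, rp₂])
                (Fin.append (half2 m phat) ![α₂, α₂, rp₃, γ])) ⬝ᵥ
    (Fin.append (Fin.append (half1 m qhat) ![β₁, β₁, r₁, r₂])
                (Fin.append (half2 m qhat) ![β₂, -β₂, r₃, r₄]))
      = p ⬝ᵥ p - 2 * (p ⬝ᵥ q) := by

  intro phat qhat γ
  have key : phat ⬝ᵥ qhat = -(2 * (p ⬝ᵥ q)) := by
    show (pairSD m p ∘ π₁) ⬝ᵥ ((-(pairSD m q)) ∘ π₁) = _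
    rw [dot_perm, dotProduct_neg, pairSD_dot]
  have hsplit := halves_dot m phat qhat
  have hγ : γ * r₄ = p ⬝ᵥ p - rp₁ * r₁ - rp₂ * r₂ - rp₃ * r₃ := by
    exact div_mul_cancel₀ _ hr₄
  calc (Fin.append (Fin.append (half1 m phat) ![α₁, -α₁, rp₁, rp₂])
                (Fin.append (half2 m phat) ![α₂, α₂, rp₃, γ])) ⬝ᵥ
    (Fin.append (Fin.append (half1 m qhat) ![β₁, β₁, r₁, r₂])
                (Fin.append (half2 m qhat) ![β₂, -β₂, r₃, r₄]))
      = (half1 m phat ⬝ᵥ half1 m qhat + (![α₁, -α₁, rp₁, rp₂] ⬝ᵥ ![β₁, β₁, r₁, r₂]))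
        + (half2 m phat ⬝ᵥ half2 m qhat + (![α₂, α₂, rp₃, γ] ⬝ᵥ ![β₂, -β₂, r₃, r₄])) := by
        simp only [dotProduct, Fin.sum_univ_add, Fin.append_left, Fin.append_right]
    _ = p ⬝ᵥ p - 2 * (p ⬝ᵥ q) := by
        simp only [dotProduct, Fin.sum_univ_four] at *
        simp only [Matrix.cons_val_zero, Matrix.cons_val_one, Matrix.head_cons,
          Matrix.cons_val_two, Matrix.cons_val_three, Matrix.tail_cons] at *
        nlinarith [hsplit, key, hγ]
end

section
/- Correctness of the DCE distance comparison: Let d be even, with all the DCE keys fixed (invertible matrices M₁, M₂ ∈ R^{(d/2+4)×(d/2+4)}, invertible M₃ ∈ R^{(2d+16)×(2d+16)}, permutations π₁ of R^d and π₂ of R^{d+8}, reals r₁,r₂,r₃,r₄ with r₄ ≠ 0, and nowhere-zero vectors k₁,k₂,k₃,k₄ ∈ R^{2d+16} with k₁∘k₃ = k₂∘k₄). For database vectors o, p ∈ R^d and query q ∈ R^d, with positive randomizers r_o, r_p, r_q > 0, define ciphertexts C_o = (ō₁', ō₂', ō₃', ō₄'), C_p = (p̄₁', p̄₂', p̄₃',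 p̄₄') and trapdoor T_q = q̄' = r_q · (M₃⁻¹ [q̄; −q̄]) ∘ (k₂ ∘ k₄) via the DCE construction (Equations for vector randomization and transformation). Then (ō₁' ∘ p̄₃' − ō₂' ∘ p̄₄')ᵀ q̄' = 2 r_o r_p r_q (‖o − q‖² − ‖p − q‖²). In particular, this quantity is negative if and only if ‖o − q‖² < ‖p − q‖². -/
open Matrix

/-- Vector randomization of a database vector p: the pair (p̂₁, p̂₂). -/
noncomputable def dbSplit (m : ℕ) (π₁ : Equiv.Perm (Fin (2 * m)))
    (r₁ r₂ r₃ r₄ α₁ α₂ s₁ s₂ s₃ : ℝ) (p : Fin (2 * m) → ℝ) :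
    (Fin (m + 4) → ℝ) × (Fin (m + 4) → ℝ) :=
  (Fin.append (half1 m (pairSD m p ∘ π₁)) ![α₁, -α₁, s₁, s₂],
   Fin.append (half2 m (pairSD m p ∘ π₁))
     ![α₂, α₂, s₃, (p ⬝ᵥ p - s₁ * r₁ - s₂ * r₂ - s₃ * r₃) / r₄])

/-- Vector randomization of a query vector q: the pair (q̂₁, q̂₂). -/
def qSplit (m : ℕ) (π₁ : Equiv.Perm (Fin (2 * m)))
    (r₁ r₂ r₃ r₄ β₁ β₂ : ℝ) (q : Fin (2 * m) → ℝ) :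
    (Fin (m + 4) → ℝ) × (Fin (m + 4) → ℝ) :=
  (Fin.append (half1 m ((-(pairSD m q)) ∘ π₁)) ![β₁, β₁, r₁, r₂],
   Fin.append (half2 m ((-(pairSD m q)) ∘ π₁)) ![β₂, -β₂, r₃, r₄])

/- ------------------- auxiliary lemmas ------------------- -/

lemma aux_minv_dot (n : ℕ) (A : Matrix (Fin n) (Fin n) ℝ) [Invertible A]
    (x y : Fin n → ℝ) : (x ᵥ* A) ⬝ᵥ (A⁻¹ *ᵥ y) = x ⬝ᵥ y := by
  rw [← dotProduct_mulVec, mulVec_mulVec, Matrix.mul_inv_of_invertible, one_mulVec]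

lemma aux_append_dot (a b : ℕ) (u v : Fin a → ℝ) (x y : Fin b → ℝ) :
    Fin.append u x ⬝ᵥ Fin.append v y = u ⬝ᵥ v + x ⬝ᵥ y := by
  simp [dotProduct, Fin.sum_univ_add, Fin.append_left, Fin.append_right]

lemma aux_perm_dot (n : ℕ) (π : Equiv.Perm (Fin n)) (u v : Fin n → ℝ) :
    (u ∘ π) ⬝ᵥ (v ∘ π) = u ⬝ᵥ v := by
  simp only [dotProduct, Function.comp]
  exact Equiv.sum_comp π (fun i => u i * v i)

lemma aux_sum_pair (m : ℕ) (f : Fin (2*m) → ℝ) :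
    ∑ i, f i = ∑ j : Fin m, (f ⟨2*j.val, by omega⟩ + f ⟨2*j.val+1, by omega⟩) := by
  have hbij : Function.Bijective
      (fun x : Fin m × Fin 2 => (⟨2*x.1.val + x.2.val, by omega⟩ : Fin (2*m))) := by
    rw [Fintype.bijective_iff_injective_and_card]
    constructor
    · rintro ⟨a, b⟩ ⟨c, d⟩ h
      simp only [Fin.mk.injEq] at h
      have hb := b.isLt; have hd := d.isLt
      have : a.val = c.val ∧ b.val = d.val := by omega
      exact Prod.ext (Fin.ext this.1) (Fin.ext this.2)
    · simp [mul_comm]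
  rw [← Function.Bijective.sum_comp hbij f, Fintype.sum_prod_type]
  refine Finset.sum_congr rfl fun j _ => ?_
  rw [Fin.sum_univ_two]
  rfl

lemma aux_pairSD_dot (m : ℕ) (p q : Fin (2*m) → ℝ) :
    pairSD m p ⬝ᵥ pairSD m q = 2 * (p ⬝ᵥ q) := by
  simp only [dotProduct, aux_sum_pair m, Finset.mul_sum]
  refine Finset.sum_congr rfl fun j _ => ?_
  have h0 : (2*j.val) % 2 = 0 := by omega
  have h1 : ¬((2*j.val+1) % 2 = 0) := by omega
  have h2 : (2*j.val) / 2 = j.val := by omega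
  have h3 : (2*j.val+1) / 2 = j.val := by omega
  simp only [pairSD, h0, h1, h2, h3, if_true, if_false]
  ring

lemma aux_half_dot (m : ℕ) (u v : Fin (2*m) → ℝ) :
    half1 m u ⬝ᵥ half1 m v + half2 m u ⬝ᵥ half2 m v = u ⬝ᵥ v := by
  have hbij : Function.Bijective
      (fun x : Fin m ⊕ Fin m => Sum.elim
        (fun i : Fin m => (⟨i.val, by omega⟩ : Fin (2*m)))
        (fun i : Fin m => (⟨m + i.val, by omega⟩ : Fin (2*m))) x) := by
    rw [Fintype.bijective_iff_injective_and_card]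
    constructor
    · rintro (a|a) (b|b) h <;> simp only [Sum.elim_inl, Sum.elim_inr, Fin.mk.injEq] at h <;>
        first
        | (exact congrArg _ (Fin.ext (by omega)))
        | (exfalso; have := a.isLt; have := b.isLt; omega)
    · simp; omega
  conv_rhs => rw [dotProduct, ← Function.Bijective.sum_comp hbij (fun i => u i * v i),
    Fintype.sum_sum_type]
  rfl

lemma aux_pointwise (a b v K1 K2 K3 K4 ro rp rq : ℝ) (h2 : K2 ≠ 0) (h4 : K4 ≠ 0)
    (hK : K1 * K3 = K2 * K4) :
    (ro * ((a+1)/K1) * (rp * ((b+1)/K3)) - ro * ((a-1)/K2) * (rp * ((b-1)/K4)))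
      * (rq * (v * (K2*K4))) = 2 * ro * rp * rq * ((a + b) * v) := by
  have h1 : K1 ≠ 0 := by
    intro h; rw [h, zero_mul] at hK; exact (mul_ne_zero h2 h4) hK.symm
  have h3 : K3 ≠ 0 := by
    intro h; rw [h, mul_zero] at hK; exact (mul_ne_zero h2 h4) hK.symm
  have lhs : (ro * ((a+1)/K1) * (rp * ((b+1)/K3)) - ro * ((a-1)/K2) * (rp * ((b-1)/K4)))
      = ro * rp * ((a+1)*(b+1) - (a-1)*(b-1)) / (K2*K4) := by
    field_simp
    linear_combination (-(ro * rp * (a+1) * (b+1))) * hK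
  rw [lhs]
  field_simp
  ring

lemma aux_split_dot (m : ℕ) (π₁ : Equiv.Perm (Fin (2 * m)))
    (r₁ r₂ r₃ r₄ : ℝ) (hr₄ : r₄ ≠ 0) (α₁ α₂ s₁ s₂ s₃ β₁ β₂ : ℝ)
    (x q : Fin (2 * m) → ℝ) :
    (dbSplit m π₁ r₁ r₂ r₃ r₄ α₁ α₂ s₁ s₂ s₃ x).1 ⬝ᵥ (qSplit m π₁ r₁ r₂ r₃ r₄ β₁ β₂ q).1 +
      (dbSplit m π₁ r₁ r₂ r₃ r₄ α₁ α₂ s₁ s₂ s₃ x).2 ⬝ᵥ (qSplit m π₁ r₁ r₂ r₃ r₄ β₁ β₂ q).2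
      = x ⬝ᵥ x - 2 * (x ⬝ᵥ q) := by
  simp only [dbSplit, qSplit]
  rw [aux_append_dot, aux_append_dot]
  have hmain : half1 m (pairSD m x ∘ π₁) ⬝ᵥ half1 m ((-(pairSD m q)) ∘ π₁) +
      half2 m (pairSD m x ∘ π₁) ⬝ᵥ half2 m ((-(pairSD m q)) ∘ π₁) = -(2 * (x ⬝ᵥ q)) := by
    rw [aux_half_dot]
    have := aux_perm_dot (2*m) π₁ (pairSD m x) (-(pairSD m q))
    rw [this, dotProduct_neg, aux_pairSD_dot]
  have ht1 : (![α₁, -α₁, s₁, s₂] : Fin 4 → ℝ) ⬝ᵥ ![β₁, β₁, r₁, r₂]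
      = s₁ * r₁ + s₂ * r₂ := by
    simp [dotProduct, Fin.sum_univ_four]
  have ht2 : (![α₂, α₂, s₃, (x ⬝ᵥ x - s₁ * r₁ - s₂ * r₂ - s₃ * r₃) / r₄] : Fin 4 → ℝ)
      ⬝ᵥ ![β₂, -β₂, r₃, r₄]
      = x ⬝ᵥ x - s₁ * r₁ - s₂ * r₂ := by
    simp [dotProduct, Fin.sum_univ_four]
    field_simp
    ring
  rw [ht1, ht2]
  linarith [hmain]

theorem stmt9 (m : ℕ) (π₁ : Equiv.Perm (Fin (2 * m)))
    (π₂ : Equiv.Perm (Fin (m + 4 + (m + 4))))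
    (M₁ M₂ : Matrix (Fin (m + 4)) (Fin (m + 4)) ℝ)
    [Invertible M₁] [Invertible M₂]
    (M₃ : Matrix (Fin (m + 4 + (m + 4) + (m + 4 + (m + 4))))
                 (Fin (m + 4 + (m + 4) + (m + 4 + (m + 4)))) ℝ)
    [Invertible M₃]
    (r₁ r₂ r₃ r₄ : ℝ) (hr₄ : r₄ ≠ 0)
    (k₁ k₂ k₃ k₄ : Fin (m + 4 + (m + 4) + (m + 4 + (m + 4))) → ℝ)
    (hk₁ : ∀ i, k₁ i ≠ 0) (hk₂ : ∀ i, k₂ i ≠ 0)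
    (hk₃ : ∀ i, k₃ i ≠ 0) (hk₄ : ∀ i, k₄ i ≠ 0)
    (hk : k₁ * k₃ = k₂ * k₄)
    (o p q : Fin (2 * m) → ℝ)
    (αo₁ αo₂ so₁ so₂ so₃ αp₁ αp₂ sp₁ sp₂ sp₃ β₁ β₂ : ℝ)
    (ro rp rq : ℝ) (hro : 0 < ro) (hrp : 0 < rp) (hrq : 0 < rq) :
    let Mup := M₃.submatrix (Fin.castAdd (m + 4 + (m + 4))) id
    let Mdown := M₃.submatrix (Fin.natAdd (m + 4 + (m + 4))) id
    let oS := dbSplit m π₁ r₁ r₂ r₃ r₄ αo₁ αo₂ so₁ so₂ so₃ o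
    let pS := dbSplit m π₁ r₁ r₂ r₃ r₄ αp₁ αp₂ sp₁ sp₂ sp₃ p
    let qS := qSplit m π₁ r₁ r₂ r₃ r₄ β₁ β₂ q
    let obar := (Fin.append (oS.1 ᵥ* M₁) (oS.2 ᵥ* M₂)) ∘ π₂
    let pbar := (Fin.append (pS.1 ᵥ* M₁) (pS.2 ᵥ* M₂)) ∘ π₂
    let qbar := (Fin.append (M₁⁻¹ *ᵥ qS.1) (M₂⁻¹ *ᵥ qS.2)) ∘ π₂
    let o₁' := ro • ((obar ᵥ* Mup + 1) / k₁)
    let o₂' := ro • ((obar ᵥ* Mup - 1) / k₂)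
    let p₃' := rp • ((pbar ᵥ* Mdown + 1) / k₃)
    let p₄' := rp • ((pbar ᵥ* Mdown - 1) / k₄)
    let q' := rq • ((M₃⁻¹ *ᵥ Fin.append qbar (-qbar)) * (k₂ * k₄))
    (o₁' * p₃' - o₂' * p₄') ⬝ᵥ q'
        = 2 * ro * rp * rq * ((o - q) ⬝ᵥ (o - q) - (p - q) ⬝ᵥ (p - q)) ∧
      ((o₁' * p₃' - o₂' * p₄') ⬝ᵥ q' < 0 ↔ (o - q) ⬝ᵥ (o - q) < (p - q) ⬝ᵥ (p - q)) := by
  intro Mup Mdown oS pS qS obar pbar qbar o₁' o₂' p₃' p₄' q'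
  have key : (o₁' * p₃' - o₂' * p₄') ⬝ᵥ q'
      = 2 * ro * rp * rq * ((o - q) ⬝ᵥ (o - q) - (p - q) ⬝ᵥ (p - q)) := by
    -- Step 1: pointwise simplification using k₁k₃ = k₂k₄
    have h1 : (o₁' * p₃' - o₂' * p₄') ⬝ᵥ q'
        = 2 * ro * rp * rq *
          ((obar ᵥ* Mup + pbar ᵥ* Mdown) ⬝ᵥ (M₃⁻¹ *ᵥ Fin.append qbar (-qbar))) := by
      simp only [dotProduct, Finset.mul_sum]
      refine Finset.sum_congr rfl fun i _ => ?_
      have hki := congrFun hk i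
      simp only [Pi.mul_apply] at hki
      simp only [o₁', o₂', p₃', p₄', q', Pi.smul_apply, Pi.sub_apply, Pi.mul_apply,
        Pi.div_apply, Pi.add_apply, Pi.one_apply, smul_eq_mul]
      linear_combination aux_pointwise ((obar ᵥ* Mup) i) ((pbar ᵥ* Mdown) i)
        ((M₃⁻¹ *ᵥ Fin.append qbar (-qbar)) i) (k₁ i) (k₂ i) (k₃ i) (k₄ i)
        ro rp rq (hk₂ i) (hk₄ i) hki
    -- Step 2: combine the two halves into a single vecMul by M₃
    have h2 : obar ᵥ* Mup + pbar ᵥ* Mdown = Fin.append obar pbar ᵥ* M₃ := by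
      funext j
      simp only [Pi.add_apply, vecMul, dotProduct, Mup, Mdown, submatrix_apply, id_eq,
        Fin.sum_univ_add, Fin.append_left, Fin.append_right]
    -- Step 3: cancel M₃
    have h3 : (Fin.append obar pbar ᵥ* M₃) ⬝ᵥ (M₃⁻¹ *ᵥ Fin.append qbar (-qbar))
        = obar ⬝ᵥ qbar - pbar ⬝ᵥ qbar := by
      rw [aux_minv_dot, aux_append_dot, dotProduct_neg]
      ring
    -- Step 4: cancel the permutation and M₁, M₂
    have h4 : obar ⬝ᵥ qbar = oS.1 ⬝ᵥ qS.1 + oS.2 ⬝ᵥ qS.2 := by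
      simp only [obar, qbar]
      rw [aux_perm_dot, aux_append_dot, aux_minv_dot, aux_minv_dot]
    have h4' : pbar ⬝ᵥ qbar = pS.1 ⬝ᵥ qS.1 + pS.2 ⬝ᵥ qS.2 := by
      simp only [pbar, qbar]
      rw [aux_perm_dot, aux_append_dot, aux_minv_dot, aux_minv_dot]
    -- Step 5: evaluate the split dot products
    have h5 : oS.1 ⬝ᵥ qS.1 + oS.2 ⬝ᵥ qS.2 = o ⬝ᵥ o - 2 * (o ⬝ᵥ q) :=
      aux_split_dot m π₁ r₁ r₂ r₃ r₄ hr₄ αo₁ αo₂ so₁ so₂ so₃ β₁ β₂ o q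
    have h5' : pS.1 ⬝ᵥ qS.1 + pS.2 ⬝ᵥ qS.2 = p ⬝ᵥ p - 2 * (p ⬝ᵥ q) :=
      aux_split_dot m π₁ r₁ r₂ r₃ r₄ hr₄ αp₁ αp₂ sp₁ sp₂ sp₃ β₁ β₂ p q
    have hexp : ∀ x : Fin (2*m) → ℝ,
        (x - q) ⬝ᵥ (x - q) = x ⬝ᵥ x - 2 * (x ⬝ᵥ q) + q ⬝ᵥ q := by
      intro x
      rw [sub_dotProduct, dotProduct_sub, dotProduct_sub, dotProduct_comm q x]
      ring
    rw [h1, h2, h3, h4, h4', h5, h5', hexp, hexp]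
    ring
  refine ⟨key, ?_⟩
  rw [key]
  have hpos : 0 < 2 * ro * rp * rq := by positivity
  constructor
  · intro h
    nlinarith
  · intro h
    nlinarith
end

section
/- KPA insecurity under exponential distance leakage: Suppose the adversary knows plaintexts p₁,...,p_{d+2} ∈ R^d and leaked values E_i = exp(r₁(‖p_i‖² − 2p_iᵀq) + r₂) > 0 for unknown q ∈ R^d and r₁ ≠ 0, r₂ ∈ R. If the matrix with rows [−2p_iᵀ, ‖p_i‖², 1] is invertible, then q is uniquely determined by the values E_i (via taking logarithms and solving the linear system). -/
/-!
Taking logarithms, the leaked value of `p` becomes `r₁ (‖p‖² - 2 pᵀq) + r₂`, which is linear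
in the unknown vector `(r₁ q, r₁, r₂)` with coefficient row `[-2 pᵀ, ‖p‖², 1]`. The leaks at
`d + 2` plaintexts therefore form an invertible linear system, which recovers `(r₁ q, r₁, r₂)`,
and `q` is then read off by dividing by `r₁ ≠ 0`.
-/

open Matrix

variable {R : Type*} {d : ℕ}

theorem dotProduct_finAppend [Semiring R] {m n : ℕ} (a b : Fin m → R) (c e : Fin n → R) :
    Fin.append a c ⬝ᵥ Fin.append b e = a ⬝ᵥ b + c ⬝ᵥ e := by
  simp only [dotProduct, Fin.sum_univ_add, Fin.append_left, Fin.append_right]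

def leakageParams [Mul R] (r₁ r₂ : R) (q : Fin d → R) : Fin (d + 2) → R :=
  Fin.append (r₁ • q) ![r₁, r₂]

theorem leakageRow_dotProduct_leakageParams [CommRing R] (p q : Fin d → R) (r₁ r₂ : R) :
    Fin.append ((-2 : R) • p) ![p ⬝ᵥ p, 1] ⬝ᵥ leakageParams r₁ r₂ q
      = r₁ * (p ⬝ᵥ p - 2 * (p ⬝ᵥ q)) + r₂ := by
  rw [leakageParams, dotProduct_finAppend, smul_dotProduct, dotProduct_smul]
  simp only [dotProduct, Fin.sum_univ_two, cons_val_zero, cons_val_one, smul_eq_mul]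
  ring

theorem eq_of_leakageParams_eq [Mul R] [Zero R] [IsLeftCancelMulZero R]
    {r₁ r₂ r₁' r₂' : R} {q q' : Fin d → R}
    (h : leakageParams r₁ r₂ q = leakageParams r₁' r₂' q') (hr₁ : r₁ ≠ 0) : q = q' := by
  have hr : r₁ = r₁' := by simpa [leakageParams] using congrFun h (Fin.natAdd d 0)
  funext j
  have hj := congrFun h (Fin.castAdd 2 j)
  simp only [leakageParams, Fin.append_left, Pi.smul_apply, smul_eq_mul, hr] at hj
  exact mul_left_cancel₀ (hr ▸ hr₁) hj

theorem stmt12_general (d : ℕ) (p : Fin (d + 2) → Fin d → ℝ)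
    (Mc : Matrix (Fin (d + 2)) (Fin (d + 2)) ℝ)
    (hMc : Mc = Matrix.of fun i => Fin.append ((-2 : ℝ) • p i) ![p i ⬝ᵥ p i, (1 : ℝ)])
    (hinv : IsUnit Mc.det)
    (q q' : Fin d → ℝ) (r₁ r₂ r₁' r₂' : ℝ) (hr₁ : r₁ ≠ 0)
    (hE : ∀ i, Real.exp (r₁ * (p i ⬝ᵥ p i - 2 * (p i ⬝ᵥ q)) + r₂)
             = Real.exp (r₁' * (p i ⬝ᵥ p i - 2 * (p i ⬝ᵥ q')) + r₂')) :
    q = q' := by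
  have hsystem : Mc *ᵥ leakageParams r₁ r₂ q = Mc *ᵥ leakageParams r₁' r₂' q' := by
    funext i
    simpa only [hMc, mulVec, of_apply, leakageRow_dotProduct_leakageParams]
      using Real.exp_injective (hE i)
  exact eq_of_leakageParams_eq
    (mulVec_injective_of_isUnit (Mc.isUnit_iff_isUnit_det.mpr hinv) hsystem) hr₁

theorem stmt12 (d : ℕ) (p : Fin (d + 2) → Fin d → ℝ)
    (Mc : Matrix (Fin (d + 2)) (Fin (d + 2)) ℝ)
    (hMc : Mc = Matrix.of fun i => Fin.append ((-2 : ℝ) • p i) ![p i ⬝ᵥ p i, (1 : ℝ)])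
    (hinv : IsUnit Mc.det)
    (q q' : Fin d → ℝ) (r₁ r₂ r₁' r₂' : ℝ) (hr₁ : r₁ ≠ 0) (hr₁' : r₁' ≠ 0)
    (hE : ∀ i, Real.exp (r₁ * (p i ⬝ᵥ p i - 2 * (p i ⬝ᵥ q)) + r₂)
             = Real.exp (r₁' * (p i ⬝ᵥ p i - 2 * (p i ⬝ᵥ q')) + r₂')) :
    q = q' :=
  stmt12_general d p Mc hMc hinv q q' r₁ r₂ r₁' r₂' hr₁ hE
end

section
/- Perturbation bound for SAP encryption: let s > 0, β > 0, and suppose f(x) = s·x + λ_x where ‖λ_x‖ ≤ sβ/4 for every x. Then for all o, p, q ∈ R^d (using Euclidean norm, not squared): if ‖o − q‖ < ‖p − q‖ − β then ‖f(o) − f(q)‖ < ‖f(p) − f(q)‖. -/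
theorem stmt16 (d : ℕ) (s β : ℝ) (hs : 0 < s) (hβ : 0 < β)
    (f lam : EuclideanSpace ℝ (Fin d) → EuclideanSpace ℝ (Fin d))
    (hf : ∀ x, f x = s • x + lam x)
    (hlam : ∀ x, ‖lam x‖ ≤ s * β / 4) :
    ∀ o p q : EuclideanSpace ℝ (Fin d),
      ‖o - q‖ < ‖p - q‖ - β → ‖f o - f q‖ < ‖f p - f q‖ := by
  intro o p q h
  have key : ∀ x, f x - f q = s • (x - q) + (lam x - lam q) := by
    intro x; rw [hf x, hf q]; module
  have hup : ‖f o - f q‖ ≤ s * ‖o - q‖ + s * β / 2 := by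
    rw [key o]
    calc ‖s • (o - q) + (lam o - lam q)‖ ≤ ‖s • (o - q)‖ + ‖lam o - lam q‖ := norm_add_le _ _
      _ ≤ s * ‖o - q‖ + (‖lam o‖ + ‖lam q‖) := by
          rw [norm_smul, Real.norm_of_nonneg hs.le]
          exact add_le_add le_rfl (norm_sub_le _ _)
      _ ≤ s * ‖o - q‖ + s * β / 2 := by
          have := hlam o; have := hlam q; linarith
  have hlo : s * ‖p - q‖ - s * β / 2 ≤ ‖f p - f q‖ := by
    have h1 : ‖s • (p - q)‖ ≤ ‖f p - f q‖ + ‖lam p - lam q‖ := by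
      have : s • (p - q) = (f p - f q) - (lam p - lam q) := by rw [key p]; abel
      rw [this]; exact norm_sub_le _ _
    rw [norm_smul, Real.norm_of_nonneg hs.le] at h1
    have h2 : ‖lam p - lam q‖ ≤ s * β / 2 := by
      have := hlam p; have := hlam q
      calc ‖lam p - lam q‖ ≤ ‖lam p‖ + ‖lam q‖ := norm_sub_le _ _
        _ ≤ s * β / 2 := by linarith
    linarith
  have := mul_lt_mul_of_pos_left h hs
  nlinarith
end
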